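/- Define functions gₙ : ℝ → ℝ by g₀(u) = e^{−u²/2} and g_{n+1}(u) = u·gₙ(u) − gₙ′(u) (the n-th unnormalized Hermite function). Then for every natural number n and every z ∈ ℂ: ∫_ℝ exp(−u²/2 + √2·u·z − z²/2) · gₙ(u) du = √π · 2^{n/2} · zⁿ. (The Segal–Bargmann transform maps the normalized Hermite functions onto the normalized monomials zⁿ/√(n!), up to the constant π^{1/4}.) -/

import Mathlib

/-!
Each `gₙ` is a real polynomial times `e^{-u²/2}`, since `u - d/du` sends `P e^{-u²/2}` to
`(2XP - P') e^{-u²/2}`. The kernel satisfies `∂ᵤA = (√2 z - u) A`, so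
`A (u f - f') = √2 z A f - ∂ᵤ(A f)`, and for such `f` the function `A f` is a polynomial times a
complex Gaussian, whose derivative integrates to zero. Hence the transform of `gₙ₊₁` is `√2 z`
times that of `gₙ`, and the Gaussian integral gives `√π` for `n = 0`.
-/

open MeasureTheory Polynomial Complex

lemma integrable_pow_mul_cexp_quadratic {b : ℂ} (hb : b.re < 0) (c d : ℂ) (n : ℕ) :
    Integrable fun u : ℝ => (u : ℂ) ^ n * cexp (b * u ^ 2 + c * u + d) := by
  set K := Real.exp (d.re - c.re ^ 2 / (2 * b.re))
  have hdom : Integrable fun u : ℝ => ‖u ^ (n : ℝ) * Real.exp (-(-b.re / 2) * u ^ 2)‖ * K :=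
    (integrable_rpow_mul_exp_neg_mul_sq (by linarith)
      (by linarith [n.cast_nonneg (α := ℝ)])).norm.mul_const K
  refine hdom.mono' (by fun_prop) (ae_of_all _ fun u => ?_)
  -- completing the square: the linear term costs half of the Gaussian decay
  have hsq : b.re * u ^ 2 + c.re * u + d.re ≤
      -(-b.re / 2) * u ^ 2 + (d.re - c.re ^ 2 / (2 * b.re)) := by
    have hgap : 0 ≤ -(b.re * u + c.re) ^ 2 / (2 * b.re) :=
      div_nonneg_of_nonpos (neg_nonpos.2 (sq_nonneg _)) (by linarith)
    have : -(b.re * u + c.re) ^ 2 / (2 * b.re) = -(-b.re / 2) * u ^ 2 +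
        (d.re - c.re ^ 2 / (2 * b.re)) - (b.re * u ^ 2 + c.re * u + d.re) := by
      field_simp [hb.ne]
      ring
    linarith
  have hre : (b * u ^ 2 + c * u + d).re = b.re * u ^ 2 + c.re * u + d.re := by
    simp [← ofReal_pow]
  rw [norm_mul, norm_mul, norm_pow, norm_real, Complex.norm_exp, Real.rpow_natCast, norm_pow, hre,
    Real.norm_of_nonneg (Real.exp_pos _).le, mul_assoc, ← Real.exp_add]
  gcongr
lemma integrable_eval_mul_cexp_quadratic {b : ℂ} (hb : b.re < 0) (c d : ℂ) (Q : ℂ[X]) :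
    Integrable fun u : ℝ => Q.eval (u : ℂ) * cexp (b * u ^ 2 + c * u + d) := by
  induction Q using Polynomial.induction_on' with
  | add p q hp hq => simpa only [eval_add, add_mul] using hp.fun_add hq
  | monomial n a =>
    simpa only [eval_monomial, mul_assoc] using
      (integrable_pow_mul_cexp_quadratic hb c d n).const_mul a

lemma hasDerivAt_eval_mul_cexp_quadratic (Q : ℂ[X]) (b c d : ℂ) (u : ℝ) :
    HasDerivAt (fun u : ℝ => Q.eval (u : ℂ) * cexp (b * u ^ 2 + c * u + d))
      ((derivative Q + Q * (C (2 * b) * X + C c)).eval (u : ℂ) *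
        cexp (b * u ^ 2 + c * u + d)) u := by
  have hquad : HasDerivAt (fun w : ℂ => b * w ^ 2 + c * w + d) (2 * b * u + c) (u : ℂ) :=
    ((((hasDerivAt_pow 2 (u : ℂ)).const_mul b).fun_add
      ((hasDerivAt_id' (u : ℂ)).const_mul c)).add_const d).congr_deriv (by ring)
  refine (((Q.hasDerivAt (u : ℂ)).fun_mul hquad.cexp).comp_ofReal).congr_deriv ?_
  simp only [eval_add, eval_mul, eval_C, eval_X]
  ring

lemma integral_deriv_eval_mul_cexp_quadratic_eq_zero {b : ℂ} (hb : b.re < 0) (c d : ℂ)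
    (Q : ℂ[X]) :
    ∫ u : ℝ, (derivative Q + Q * (C (2 * b) * X + C c)).eval (u : ℂ) *
      cexp (b * u ^ 2 + c * u + d) = 0 :=
  integral_eq_zero_of_hasDerivAt_of_integrable (hasDerivAt_eval_mul_cexp_quadratic Q b c d)
    (integrable_eval_mul_cexp_quadratic hb c d _) (integrable_eval_mul_cexp_quadratic hb c d Q)

lemma hasDerivAt_eval_mul_gaussian (P : ℝ[X]) (u : ℝ) :
    HasDerivAt (fun u => P.eval u * Real.exp (-u ^ 2 / 2))
      ((derivative P - X * P).eval u * Real.exp (-u ^ 2 / 2)) u := by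
  have hquad : HasDerivAt (fun u : ℝ => -u ^ 2 / 2) (-u) u :=
    (((hasDerivAt_pow 2 u).fun_neg).div_const 2).congr_deriv (by ring)
  refine ((P.hasDerivAt u).fun_mul hquad.exp).congr_deriv ?_
  simp only [eval_sub, eval_mul, eval_X]
  ring

lemma mul_sub_deriv_eq_eval_mul_gaussian {f : ℝ → ℝ} {P : ℝ[X]}
    (hf : ∀ u, f u = P.eval u * Real.exp (-u ^ 2 / 2)) (u : ℝ) :
    u * f u - deriv f u = (C 2 * X * P - derivative P).eval u * Real.exp (-u ^ 2 / 2) := by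
  rw [show f = _ from funext hf, (hasDerivAt_eval_mul_gaussian P u).deriv]
  simp only [eval_sub, eval_mul, eval_C, eval_X]
  ring

noncomputable def bargmannKernel (z : ℂ) (u : ℝ) : ℂ :=
  cexp (-(u : ℂ) ^ 2 / 2 + (Real.sqrt 2 : ℂ) * u * z - z ^ 2 / 2)

lemma bargmannKernel_mul_gaussian (z : ℂ) (u : ℝ) :
    bargmannKernel z u * (Real.exp (-u ^ 2 / 2) : ℂ) =
      cexp (-1 * u ^ 2 + (Real.sqrt 2 * z) * u + -z ^ 2 / 2) := by
  rw [bargmannKernel, ofReal_exp, ← Complex.exp_add]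
  push_cast
  congr 1
  ring

lemma integral_bargmannKernel_mul_gaussian (z : ℂ) :
    ∫ u : ℝ, bargmannKernel z u * (Real.exp (-u ^ 2 / 2) : ℂ) = Real.sqrt Real.pi := by
  have hsqrt2 : ((Real.sqrt 2 : ℝ) : ℂ) ^ 2 = 2 := by
    rw [← ofReal_pow, Real.sq_sqrt zero_le_two, ofReal_ofNat]
  simp_rw [bargmannKernel_mul_gaussian, integral_cexp_quadratic (by simp : (-1 : ℂ).re < 0),
    mul_pow, hsqrt2]
  rw [Real.sqrt_eq_rpow, ofReal_cpow Real.pi_pos.le]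
  ring_nf
  simp

lemma integral_bargmannKernel_mul_sub_deriv {f : ℝ → ℝ} {P : ℝ[X]}
    (hf : ∀ u, f u = P.eval u * Real.exp (-u ^ 2 / 2)) (z : ℂ) :
    ∫ u : ℝ, bargmannKernel z u * ((u * f u - deriv f u : ℝ) : ℂ) =
      Real.sqrt 2 * z * ∫ u : ℝ, bargmannKernel z u * (f u : ℂ) := by
  set Q : ℂ[X] := P.map ofRealHom
  have hQ (R : ℝ[X]) (u : ℝ) : ((R.eval u : ℝ) : ℂ) = (R.map ofRealHom).eval (u : ℂ) :=
    (eval_map_apply (p := R) (f := ofRealHom) u).symm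
  have hbargmann (u : ℝ) : bargmannKernel z u * (f u : ℂ) =
      Q.eval (u : ℂ) * cexp (-1 * u ^ 2 + (Real.sqrt 2 * z) * u + -z ^ 2 / 2) := by
    rw [hf, ofReal_mul, hQ, mul_left_comm, bargmannKernel_mul_gaussian]
  have hcreation (u : ℝ) : bargmannKernel z u * ((u * f u - deriv f u : ℝ) : ℂ) =
      Real.sqrt 2 * z * (bargmannKernel z u * (f u : ℂ)) -
        (derivative Q + Q * (C (2 * -1) * X + C (Real.sqrt 2 * z))).eval (u : ℂ) *
          cexp (-1 * u ^ 2 + (Real.sqrt 2 * z) * u + -z ^ 2 / 2) := by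
    rw [mul_sub_deriv_eq_eval_mul_gaussian hf, hbargmann, ofReal_mul, mul_left_comm,
      bargmannKernel_mul_gaussian]
    simp only [eval_sub, eval_mul, eval_add, eval_C, eval_X]
    push_cast
    rw [hQ P, hQ (derivative P), derivative_map]
    ring
  have hint := integrable_eval_mul_cexp_quadratic (by simp : (-1 : ℂ).re < 0) (Real.sqrt 2 * z)
    (-z ^ 2 / 2) Q
  simp_rw [hcreation]
  rw [integral_sub ((hint.congr (ae_of_all _ fun u => (hbargmann u).symm)).const_mul _)
    (integrable_eval_mul_cexp_quadratic (by simp) _ _ _), integral_const_mul,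
    integral_deriv_eval_mul_cexp_quadratic_eq_zero (by simp), sub_zero]

/-- The Segal–Bargmann transform maps the unnormalized Hermite functions
`g₀(u) = e^{-u²/2}`, `g_{n+1} = u gₙ - gₙ′` to the monomials:
`∫_ℝ exp(-u²/2 + √2 u z - z²/2) gₙ(u) du = √π 2^{n/2} zⁿ`. -/
theorem segalBargmann_hermite (g : ℕ → ℝ → ℝ)
    (hg0 : ∀ u : ℝ, g 0 u = Real.exp (-u ^ 2 / 2))
    (hgrec : ∀ (n : ℕ) (u : ℝ), g (n + 1) u = u * g n u - deriv (g n) u) :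
    ∀ (n : ℕ) (z : ℂ),
      (∫ u : ℝ, Complex.exp (-(u : ℂ) ^ 2 / 2 + (Real.sqrt 2 : ℂ) * (u : ℂ) * z -
            z ^ 2 / 2) * (g n u : ℂ)) =
        (Real.sqrt Real.pi : ℂ) * (Real.sqrt 2 : ℂ) ^ n * z ^ n := by
  have hpoly (n : ℕ) : ∃ P : ℝ[X], ∀ u, g n u = P.eval u * Real.exp (-u ^ 2 / 2) := by
    induction n with
    | zero => exact ⟨1, fun u => by rw [hg0, eval_one, one_mul]⟩
    | succ n ih =>
      obtain ⟨P, hP⟩ := ih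
      exact ⟨_, fun u => by rw [hgrec, mul_sub_deriv_eq_eval_mul_gaussian hP]⟩
  intro n z
  change ∫ u : ℝ, bargmannKernel z u * (g n u : ℂ) = _
  induction n with
  | zero => simp_rw [hg0, integral_bargmannKernel_mul_gaussian, pow_zero, mul_one]
  | succ n ih =>
    obtain ⟨P, hP⟩ := hpoly n
    simp_rw [hgrec, integral_bargmannKernel_mul_sub_deriv hP, ih]
    ring
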